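/- (Lemma 2, frequency-offset form of the quadratic form.) Let L ≥ 1 be an integer, X ∈ ℂ^{L×L} Hermitian, p ∈ ℂ^L and ω ∈ ℝ, and let p(ω) = diag(τ(ω)) p where τ(ω) = (e^{i(ℓ−1)ω})_{ℓ=1}^{L}. Then p(ω)^H X p(ω) = 2 · Re( τ(ω)^T · (Ψ(X) ⊙ Ψ(p^* p^T))^T · 1_L ), where ⊙ is the entrywise matrix product and 1_L the all-one vector. -/

import Mathlib

open Matrix

/-- The `k`-th super-diagonal vector `ψ_k(B)` (0-based `k`): entry `ℓ` equals
`c_k · B_{ℓ, ℓ+k}` when `ℓ + k < K` and `0` otherwise, where `c_0 = √2/2` and `c_k = 1`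
for `k ≥ 1` (this matches the paper's 1-based `ψ_{k+1}`). -/
noncomputable def psi (K : ℕ) (k : Fin K) (B : Matrix (Fin K) (Fin K) ℂ) : Fin K → ℂ :=
  fun ℓ =>
    if h : (ℓ : ℕ) + (k : ℕ) < K then
      (if (k : ℕ) = 0 then ((Real.sqrt 2 / 2 : ℝ) : ℂ) else 1) * B ℓ ⟨(ℓ : ℕ) + (k : ℕ), h⟩
    else 0

/-- `Ψ(B)`: the matrix whose `k`-th column is `ψ_k(B)`. -/
noncomputable def bigPsi (K : ℕ) (B : Matrix (Fin K) (Fin K) ℂ) : Matrix (Fin K) (Fin K) ℂ :=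
  Matrix.of fun ℓ k => psi K k B ℓ

/-- The `K`-dimensional DFT matrix (0-based indices): `F_{n,m} = e^{-2πi·n·m/K}`. -/
noncomputable def dft (K : ℕ) : Matrix (Fin K) (Fin K) ℂ :=
  Matrix.of fun n m : Fin K =>
    Complex.exp (-(2 * (Real.pi : ℂ) * Complex.I * ((n : ℕ) : ℂ) * ((m : ℕ) : ℂ)) / (K : ℂ))

/-- The zero-padded, time-shifted pilot `p(t) ∈ ℂ^{L+D}` (0-based): entry `k` equals
`p_{k-t}` when `t ≤ k < t + L` and `0` otherwise. -/
def shiftPad (L D : ℕ) (p : Fin L → ℂ) (t : ℕ) : Fin (L + D) → ℂ :=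
  fun k => if h : t ≤ (k : ℕ) ∧ (k : ℕ) - t < L then p ⟨(k : ℕ) - t, h.2⟩ else 0

/-!
Write `x = p(ω)` and index from `0`. Since `τ(ω)_d = conj(τ(ω)_k) · τ(ω)_{k+d}`, the term of
`S = τ(ω)ᵀ (Ψ(X) ⊙ Ψ(p^* pᵀ))ᵀ 1` indexed by `(k, d)` is `c_d² · conj(x_k) X_{k,k+d} x_{k+d}`:
`S` is the quadratic form `x^H X x` summed over the upper triangle, with weight `c_0² = 1/2` on
the diagonal. Hermitian symmetry turns `conj S` into the same sum over the lower triangle, and the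
weights of `S` and `conj S` add up to `1` at every entry, so `2 Re S = S + conj S = x^H X x`.
-/

open Finset Complex

section TriangleWeight

variable {ι : Type*} [LinearOrder ι]

noncomputable def triangleWeight (a b : ι) : ℝ :=
  if a < b then 1 else if a = b then 1 / 2 else 0

lemma triangleWeight_add_swap (a b : ι) : triangleWeight a b + triangleWeight b a = 1 := by
  unfold triangleWeight
  rcases lt_trichotomy a b with h | rfl | h
  · simp [h, h.not_gt, h.ne']
  · norm_num
  · simp [h, h.not_gt, h.ne']

lemma triangleWeight_of_lt {a b : ι} (h : b < a) : triangleWeight a b = 0 := by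
  simp [triangleWeight, h.not_gt, h.ne']

theorem dotProduct_mulVec_eq_two_re_triangleWeight [Fintype ι] {X : Matrix ι ι ℂ}
    (hX : X.IsHermitian) (x : ι → ℂ) :
    star x ⬝ᵥ X *ᵥ x =
      ((2 * (∑ a, ∑ b, (triangleWeight a b : ℂ) * (star (x a) * X a b * x b)).re : ℝ) : ℂ) := by
  set S := ∑ a, ∑ b, (triangleWeight a b : ℂ) * (star (x a) * X a b * x b)
  have hconj : (starRingEnd ℂ) S =
      ∑ a, ∑ b, (triangleWeight b a : ℂ) * (star (x a) * X a b * x b) := by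
    rw [sum_comm, map_sum]
    refine sum_congr rfl fun a _ => ?_
    rw [map_sum]
    refine sum_congr rfl fun b _ => ?_
    rw [← hX.apply a b]
    simp only [map_mul, conj_ofReal, RCLike.star_def, conj_conj]
    ring
  rw [← add_conj, hconj, ← sum_add_distrib]
  simp only [← sum_add_distrib, ← add_mul, ← ofReal_add, triangleWeight_add_swap, ofReal_one,
    one_mul, dotProduct, mulVec, Pi.star_apply, mul_sum, mul_assoc]

end TriangleWeight

lemma sum_dite_add_lt_eq_sum {M : Type*} [AddCommMonoid M] {L : ℕ} (a : Fin L) (g : Fin L → M)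
    (hg : ∀ b, b < a → g b = 0) :
    ∑ d : Fin L, (if h : (a : ℕ) + d < L then g ⟨a + d, h⟩ else 0) = ∑ b, g b := by
  set G : ℕ → M := fun b => if h : b < L then g ⟨b, h⟩ else 0
  have hG_low : ∑ b ∈ range a, G b = 0 := sum_eq_zero fun b hb => by
    have hba : b < a := mem_range.mp hb
    simp only [G, dif_pos (hba.trans a.isLt)]
    exact hg _ hba
  have hG_high : ∑ b ∈ range L, G b = ∑ b ∈ range (a + L), G b :=
    sum_subset (range_subset_range.mpr (by omega)) fun b _ hb => dif_neg (by simpa using hb)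
  calc ∑ d : Fin L, (if h : (a : ℕ) + d < L then g ⟨a + d, h⟩ else 0)
      = ∑ d ∈ range L, G (a + d) := Fin.sum_univ_eq_sum_range (fun d => G (a + d)) L
    _ = ∑ b ∈ range L, G b := by rw [hG_high, sum_range_add, hG_low, zero_add]
    _ = ∑ b, g b := by simp [G, ← Fin.sum_univ_eq_sum_range]

lemma hadamard_bigPsi_apply {L : ℕ} (A B : Matrix (Fin L) (Fin L) ℂ) (k d : Fin L) :
    (bigPsi L A ⊙ bigPsi L B) k d =
      if h : (k : ℕ) + d < L then
        (triangleWeight k ⟨k + d, h⟩ : ℂ) * (A k ⟨k + d, h⟩ * B k ⟨k + d, h⟩)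
      else 0 := by
  simp only [hadamard_apply, bigPsi, psi, of_apply]
  split_ifs with h hd
  · have hk : k = ⟨k + d, h⟩ := Fin.ext (by simp [hd])
    have hc : Real.sqrt 2 / 2 * (Real.sqrt 2 / 2) = triangleWeight k ⟨k + d, h⟩ := by
      rw [triangleWeight, if_neg (by rw [← hk]; exact lt_irrefl k), if_pos hk,
        div_mul_div_comm, Real.mul_self_sqrt zero_le_two]
      norm_num
    rw [← hc]
    push_cast
    ring
  · have hk : k < ⟨k + d, h⟩ := Fin.lt_def.mpr (by simp; omega)
    simp [triangleWeight, hk]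
  · simp

lemma conj_exp_mul_exp_add (ω : ℝ) (k d : ℕ) :
    (starRingEnd ℂ) (exp (I * k * ω)) * exp (I * ((k + d : ℕ) : ℂ) * ω) = exp (I * d * ω) := by
  rw [← exp_conj, ← exp_add]
  congr 1
  simp only [map_mul, conj_I, conj_ofReal, map_natCast]
  push_cast
  ring

theorem phase_dotProduct_hadamard_bigPsi {L : ℕ} (X : Matrix (Fin L) (Fin L) ℂ) (p : Fin L → ℂ)
    (ω : ℝ) :
    (fun ℓ : Fin L => exp (I * ((ℓ : ℕ) : ℂ) * ω)) ⬝ᵥ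
        (bigPsi L X ⊙ bigPsi L (vecMulVec (star p) p))ᵀ *ᵥ (fun _ => (1 : ℂ)) =
      ∑ a : Fin L, ∑ b : Fin L, (triangleWeight a b : ℂ) *
        (star (exp (I * ((a : ℕ) : ℂ) * ω) * p a) * X a b * (exp (I * ((b : ℕ) : ℂ) * ω) * p b)) := by
  simp only [dotProduct, mulVec, transpose_apply, mul_one, hadamard_bigPsi_apply, mul_sum]
  rw [sum_comm]
  refine sum_congr rfl fun a _ => ?_
  refine Eq.trans (sum_congr rfl fun d _ => ?_) (sum_dite_add_lt_eq_sum a _ fun b hb => by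
    rw [triangleWeight_of_lt hb, ofReal_zero, zero_mul])
  split_ifs with h
  · rw [← conj_exp_mul_exp_add ω a d]
    simp only [vecMulVec_apply, Pi.star_apply, RCLike.star_def, map_mul]
    ring
  · rw [mul_zero]

theorem stmt_13 (L : ℕ) (X : Matrix (Fin L) (Fin L) ℂ) (hX : X.IsHermitian)
    (p : Fin L → ℂ) (ω : ℝ) :
    star (fun ℓ : Fin L => Complex.exp (Complex.I * ((ℓ : ℕ) : ℂ) * (ω : ℂ)) * p ℓ) ⬝ᵥ
        X *ᵥ (fun ℓ : Fin L => Complex.exp (Complex.I * ((ℓ : ℕ) : ℂ) * (ω : ℂ)) * p ℓ)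
      = ((2 * ((fun ℓ : Fin L => Complex.exp (Complex.I * ((ℓ : ℕ) : ℂ) * (ω : ℂ))) ⬝ᵥ
            (Matrix.hadamard (bigPsi L X) (bigPsi L (vecMulVec (star p) p)))ᵀ *ᵥ
              fun _ => (1 : ℂ)).re : ℝ) : ℂ) := by
  rw [phase_dotProduct_hadamard_bigPsi, dotProduct_mulVec_eq_two_re_triangleWeight hX]
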